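/- arXiv:2605.03074 — 5 statements merged into one kernel-verified Lean document; each statement's English description precedes it below -/
import Mathlib

section
/- If U, V, Ũ, Ṽ are n×n real symmetric positive definite matrices with det U = det Ũ = 1 and V ⊗ U = Ṽ ⊗ Ũ (Kronecker product), then U = Ũ and V = Ṽ. -/
/-!
The `(i, i)` block of `V ⊗ₖ U` is `V i i • U`, so `V i i • U = V' i i • U'` with both scalars
positive. Taking determinants gives `(V i i) ^ n = (V' i i) ^ n`, hence equal scalars and `U = U'`;
comparing the `(i, i)` entries inside every block then gives `U i i • V = U i i • V'`.
-/

open Matrix Kronecker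

namespace Matrix

variable {R l m p q : Type*}

theorem smul_eq_smul_of_kronecker_eq_left [Mul R] {A C : Matrix l m R} {B D : Matrix p q R}
    (h : A ⊗ₖ B = C ⊗ₖ D) (i : l) (j : m) : A i j • B = C i j • D := by
  ext k k'
  simpa [kroneckerMap_apply] using congrFun (congrFun h (i, k)) (j, k')

theorem smul_eq_smul_of_kronecker_eq_right [CommMagma R] {A C : Matrix l m R}
    {B D : Matrix p q R} (h : A ⊗ₖ B = C ⊗ₖ D) (k : p) (k' : q) : B k k' • A = D k k' • C := by
  ext i j
  simpa [kroneckerMap_apply, mul_comm] using congrFun (congrFun h (i, k)) (j, k')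

theorem eq_of_smul_eq_smul_of_det_eq {𝕜 : Type*} [Field 𝕜] [LinearOrder 𝕜] [IsStrictOrderedRing 𝕜]
    [Fintype m] [DecidableEq m] {A B : Matrix m m 𝕜} {a b : 𝕜} (ha : 0 < a) (hb : 0 < b)
    (hab : a • A = b • B) (hdet : A.det = B.det) (hdet₀ : A.det ≠ 0) : A = B := by
  cases isEmpty_or_nonempty m
  · exact Subsingleton.elim A B
  have hpow : a ^ Fintype.card m = b ^ Fintype.card m := by
    have := congrArg det hab
    rw [det_smul, det_smul, ← hdet] at this
    exact mul_right_cancel₀ hdet₀ this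
  have hab' : a = b := (pow_left_inj₀ ha.le hb.le Fintype.card_ne_zero).mp hpow
  subst hab'
  exact smul_right_injective _ ha.ne' hab

end Matrix

theorem kronecker_param_injective_general {n : ℕ}
    (U V U' V' : Matrix (Fin n) (Fin n) ℝ)
    (hU : U.PosDef) (hV : V.PosDef) (hV' : V'.PosDef)
    (hdU : U.det = 1) (hdU' : U'.det = 1)
    (h : V ⊗ₖ U = V' ⊗ₖ U') :
    U = U' ∧ V = V' := by
  cases isEmpty_or_nonempty (Fin n) with
  | inl _ => exact ⟨Subsingleton.elim _ _, Subsingleton.elim _ _⟩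
  | inr hne =>
    obtain ⟨i⟩ := hne
    have hUU' : U = U' :=
      eq_of_smul_eq_smul_of_det_eq hV.diag_pos hV'.diag_pos
        (smul_eq_smul_of_kronecker_eq_left h i i) (hdU.trans hdU'.symm) (hdU ▸ one_ne_zero)
    subst hUU'
    exact ⟨rfl, smul_right_injective _ hU.diag_pos.ne' (smul_eq_smul_of_kronecker_eq_right h i i)⟩

/-- Injectivity of the determinant-normalized Kronecker parametrization:
if `det U = det Ũ = 1` and `V ⊗ U = Ṽ ⊗ Ũ`, then the factors coincide. -/
theorem kronecker_param_injective {n : ℕ}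
    (U V U' V' : Matrix (Fin n) (Fin n) ℝ)
    (hU : U.PosDef) (hV : V.PosDef) (hU' : U'.PosDef) (hV' : V'.PosDef)
    (hdU : U.det = 1) (hdU' : U'.det = 1)
    (h : V ⊗ₖ U = V' ⊗ₖ U') :
    U = U' ∧ V = V' :=
  kronecker_param_injective_general U V U' V' hU hV hV' hdU hdU' h
end

section
/- Let U, V ∈ S++^n with det U = 1, and let H_U, H_V be n×n real symmetric matrices with tr(U⁻¹ H_U) = 0. If V ⊗ H_U + H_V ⊗ U = 0, then H_U = 0 and H_V = 0. -/
open Matrix Kronecker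

/-! Reading `V ⊗ H_U + H_V ⊗ U = 0` at a nonzero entry of `V` gives `H_U = c U`. Then
`tr(U⁻¹ H_U) = c n` forces `c = 0`, leaving `H_V ⊗ U = 0` with `U ≠ 0`, so `H_V = 0`. -/

namespace Matrix

variable {K R : Type*} {l m p q : Type*}

theorem kronecker_eq_zero_iff [MulZeroClass R] [NoZeroDivisors R]
    {A : Matrix l m R} {B : Matrix p q R} : A ⊗ₖ B = 0 ↔ A = 0 ∨ B = 0 := by
  refine ⟨fun h => ?_, ?_⟩
  · by_contra! hAB
    obtain ⟨i, j, hA⟩ : ∃ i j, A i j ≠ 0 := by simpa [← Matrix.ext_iff] using hAB.1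
    obtain ⟨k, r, hB⟩ : ∃ k r, B k r ≠ 0 := by simpa [← Matrix.ext_iff] using hAB.2
    exact mul_ne_zero hA hB (by simpa using congrFun (congrFun h (i, k)) (j, r))
  · rintro (rfl | rfl) <;> simp

theorem exists_eq_smul_of_kronecker_add_kronecker_eq_zero [Field K]
    {A C : Matrix l m K} {B D : Matrix p q K} (h : A ⊗ₖ B + C ⊗ₖ D = 0) (hA : A ≠ 0) :
    ∃ c : K, B = c • D := by
  obtain ⟨i, j, hAij⟩ : ∃ i j, A i j ≠ 0 := by simpa [← Matrix.ext_iff] using hA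
  refine ⟨-C i j / A i j, ?_⟩
  ext k r
  have hentry : A i j * B k r + C i j * D k r = 0 := by
    simpa using congrFun (congrFun h (i, k)) (j, r)
  rw [smul_apply, smul_eq_mul]
  field_simp
  linear_combination hentry

end Matrix

theorem kronecker_differential_injective_general {n : ℕ}
    (U V HU HV : Matrix (Fin n) (Fin n) ℝ)
    (hU : U.PosDef) (hV : V.PosDef)
    (htr : (U⁻¹ * HU).trace = 0)
    (h : V ⊗ₖ HU + HV ⊗ₖ U = 0) :
    HU = 0 ∧ HV = 0 := by
  cases isEmpty_or_nonempty (Fin n) with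
  | inl => exact ⟨Subsingleton.elim _ _, Subsingleton.elim _ _⟩
  | inr hne =>
    obtain ⟨c, rfl⟩ := exists_eq_smul_of_kronecker_add_kronecker_eq_zero h hV.isUnit.ne_zero
    have hc : c = 0 := by
      have hn : (n : ℝ) ≠ 0 := Nat.cast_ne_zero.mpr (Fin.pos_iff_nonempty.mpr hne).ne'
      rw [Matrix.mul_smul, nonsing_inv_mul _ ((isUnit_iff_isUnit_det U).mp hU.isUnit), trace_smul,
        trace_one, Fintype.card_fin, smul_eq_mul] at htr
      exact (mul_eq_zero.mp htr).resolve_right hn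
    subst hc
    rw [zero_smul, kronecker_zero, zero_add, kronecker_eq_zero_iff] at h
    exact ⟨zero_smul _ _, h.resolve_right hU.isUnit.ne_zero⟩

/-- Immersion property of the differential of `Φ(U,V) = V ⊗ U` under the
determinant-one gauge: if `tr(U⁻¹ H_U) = 0` and `V ⊗ H_U + H_V ⊗ U = 0`,
then `H_U = 0` and `H_V = 0`. -/
theorem kronecker_differential_injective {n : ℕ}
    (U V HU HV : Matrix (Fin n) (Fin n) ℝ)
    (hU : U.PosDef) (hV : V.PosDef) (hdU : U.det = 1)
    (hHU : HU.IsSymm) (hHV : HV.IsSymm)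
    (htr : (U⁻¹ * HU).trace = 0)
    (h : V ⊗ₖ HU + HV ⊗ₖ U = 0) :
    HU = 0 ∧ HV = 0 :=
  kronecker_differential_injective_general U V HU HV hU hV htr h
end

section
/- Let K_i = V_i ⊗ U_i for i = 0,1 with U_i, V_i ∈ S++^n, and set A := V₀^{1/2} V₁ V₀^{1/2}, B := U₀^{1/2} U₁ U₀^{1/2}. Then the squared Bures–Wasserstein distance satisfies d_B²(K₀, K₁) = tr(U₀)tr(V₀) + tr(U₁)tr(V₁) − 2 tr(A^{1/2}) tr(B^{1/2}). -/
/-!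
Since `(X ⊗ₖ Y) * (Z ⊗ₖ W) = (X * Z) ⊗ₖ (Y * W)` and the PSD square root of `A` is the unique
PSD solution of `X * X = A`, `(V ⊗ₖ U)^{1/2} = V^{1/2} ⊗ₖ U^{1/2}`. Hence the matrix inside the outer
square root of `d_B²(V₀ ⊗ₖ U₀, V₁ ⊗ₖ U₁)` is `A ⊗ₖ B`, its square root is `A^{1/2} ⊗ₖ B^{1/2}`,
and the trace of a Kronecker product is the product of the traces.
-/

open Matrix Kronecker

/-- The positive semidefinite square root of a positive semidefinite matrix,
extended by `0` to all matrices.  On symmetric positive definite matrices this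
is the unique symmetric positive definite square root. -/
noncomputable def matSqrt {m : Type*} [Fintype m] [DecidableEq m]
    (A : Matrix m m ℝ) : Matrix m m ℝ :=
  open scoped Classical in
  if h : A.PosSemidef then
    h.1.eigenvectorUnitary.1 * diagonal ((↑) ∘ (√·) ∘ h.1.eigenvalues)
      * (star h.1.eigenvectorUnitary : Matrix m m ℝ) else 0

/-- The squared Bures--Wasserstein distance on positive definite matrices. -/
noncomputable def buresDistSq {m : Type*} [Fintype m] [DecidableEq m]
    (A B : Matrix m m ℝ) : ℝ :=
  A.trace + B.trace - 2 * (matSqrt (matSqrt A * B * matSqrt A)).trace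

open scoped MatrixOrder

section matSqrt

variable {m l : Type*} [Fintype m] [DecidableEq m] [Fintype l] [DecidableEq l]

lemma matSqrt_eq_cfcSqrt {A : Matrix m m ℝ} (hA : A.PosSemidef) : matSqrt A = CFC.sqrt A := by
  rw [matSqrt, dif_pos hA, CFC.sqrt_eq_real_sqrt A hA.nonneg,
    cfcₙ_eq_cfc (hf0 := Real.sqrt_zero), hA.1.cfc_eq, IsHermitian.cfc,
    Unitary.conjStarAlgAut_apply]
  rfl

lemma posSemidef_matSqrt (A : Matrix m m ℝ) : (matSqrt A).PosSemidef := by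
  by_cases hA : A.PosSemidef
  · rw [matSqrt_eq_cfcSqrt hA]
    exact (CFC.sqrt_nonneg A).posSemidef
  · rw [matSqrt, dif_neg hA]
    exact .zero

lemma matSqrt_eq_of_mul_self_eq {A X : Matrix m m ℝ} (hX : X.PosSemidef) (h : X * X = A) :
    matSqrt A = X := by
  have hA : A.PosSemidef := by
    simpa only [hX.isHermitian.eq, h] using posSemidef_conjTranspose_mul_self X
  rw [matSqrt_eq_cfcSqrt hA]
  exact CFC.sqrt_unique h hX.nonneg

lemma matSqrt_mul_self {A : Matrix m m ℝ} (hA : A.PosSemidef) : matSqrt A * matSqrt A = A := by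
  rw [matSqrt_eq_cfcSqrt hA]
  exact CFC.sqrt_mul_sqrt_self A hA.nonneg

lemma Matrix.PosSemidef.matSqrt_mul_mul_matSqrt (A : Matrix m m ℝ) {B : Matrix m m ℝ}
    (hB : B.PosSemidef) : (matSqrt A * B * matSqrt A).PosSemidef := by
  simpa only [(posSemidef_matSqrt A).isHermitian.eq] using
    hB.mul_mul_conjTranspose_same (matSqrt A)

lemma matSqrt_kronecker {A : Matrix m m ℝ} {B : Matrix l l ℝ}
    (hA : A.PosSemidef) (hB : B.PosSemidef) : matSqrt (A ⊗ₖ B) = matSqrt A ⊗ₖ matSqrt B :=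
  matSqrt_eq_of_mul_self_eq ((posSemidef_matSqrt A).kronecker (posSemidef_matSqrt B)) <| by
    rw [← mul_kronecker_mul, matSqrt_mul_self hA, matSqrt_mul_self hB]

end matSqrt

/-- Pairwise Kronecker reduction of the squared Bures--Wasserstein distance:
`d_B²(V₀⊗U₀, V₁⊗U₁) = tr U₀ tr V₀ + tr U₁ tr V₁ − 2 tr(A^{1/2}) tr(B^{1/2})`
with `A = V₀^{1/2} V₁ V₀^{1/2}` and `B = U₀^{1/2} U₁ U₀^{1/2}`. -/
theorem buresDistSq_kronecker {n : ℕ}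
    (U₀ U₁ V₀ V₁ : Matrix (Fin n) (Fin n) ℝ)
    (hU₀ : U₀.PosDef) (hU₁ : U₁.PosDef) (hV₀ : V₀.PosDef) (hV₁ : V₁.PosDef) :
    buresDistSq (V₀ ⊗ₖ U₀) (V₁ ⊗ₖ U₁)
      = U₀.trace * V₀.trace + U₁.trace * V₁.trace
        - 2 * (matSqrt (matSqrt V₀ * V₁ * matSqrt V₀)).trace
            * (matSqrt (matSqrt U₀ * U₁ * matSqrt U₀)).trace := by
  have hA := hV₁.posSemidef.matSqrt_mul_mul_matSqrt V₀
  have hB := hU₁.posSemidef.matSqrt_mul_mul_matSqrt U₀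
  rw [buresDistSq, matSqrt_kronecker hV₀.posSemidef hU₀.posSemidef, ← mul_kronecker_mul,
    ← mul_kronecker_mul, matSqrt_kronecker hA hB, trace_kronecker, trace_kronecker,
    trace_kronecker]
  ring
end

section
/- Define Π(Z) := Z − (1/n) I_n ⊗ tr₁(Z) − (1/n) tr₂(Z) ⊗ I_n + (tr(Z)/n²) I_{n²} for Z an n²×n² real symmetric matrix, where tr₁(Z) = Σ_q Z_{qq} (sum of diagonal n×n blocks) and tr₂(Z) = [tr(Z_{qr})]_{q,r}. Then Π(Z) = 0 if and only if Z = I_n ⊗ A + B ⊗ I_n for some symmetric n×n matrices A, B with tr(A) = 0. -/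
/-! `Π` is linear and kills `I ⊗ A` (when `tr A = 0`) and `B ⊗ I`, which gives one direction.
Conversely, `Z − Π(Z) = I ⊗ A + B ⊗ I` holds for every `Z`, with `B = tr₂(Z)/n` and
`A = tr₁(Z)/n − (tr Z/n²) I`; here `tr A = 0` because `tr (tr₁ Z) = tr Z`, and `A`, `B` are
symmetric when `Z` is. -/

open Matrix Kronecker

variable {n : ℕ}

/-- First partial trace: sum of the diagonal `n×n` blocks,
`tr₁(Z)_{p s} = Σ_q Z_{(q,p),(q,s)}` (so that `tr₁(V ⊗ U) = tr(V)·U`). -/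
def ptrace1 (Z : Matrix (Fin n × Fin n) (Fin n × Fin n) ℝ) :
    Matrix (Fin n) (Fin n) ℝ :=
  Matrix.of fun p s => ∑ q : Fin n, Z (q, p) (q, s)

/-- Second partial trace: blockwise traces,
`tr₂(Z)_{q r} = Σ_p Z_{(q,p),(r,p)}` (so that `tr₂(V ⊗ U) = tr(U)·V`). -/
def ptrace2 (Z : Matrix (Fin n × Fin n) (Fin n × Fin n) ℝ) :
    Matrix (Fin n) (Fin n) ℝ :=
  Matrix.of fun q r => ∑ p : Fin n, Z (q, p) (r, p)

/-- The partial-trace residual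
`Π(Z) = Z − (1/n) I ⊗ tr₁(Z) − (1/n) tr₂(Z) ⊗ I + (tr Z / n²) I`. -/
noncomputable def piRes (Z : Matrix (Fin n × Fin n) (Fin n × Fin n) ℝ) :
    Matrix (Fin n × Fin n) (Fin n × Fin n) ℝ :=
  Z - ((n : ℝ)⁻¹) • ((1 : Matrix (Fin n) (Fin n) ℝ) ⊗ₖ ptrace1 Z)
    - ((n : ℝ)⁻¹) • (ptrace2 Z ⊗ₖ (1 : Matrix (Fin n) (Fin n) ℝ))
    + (Z.trace / (n : ℝ) ^ 2) • (1 : Matrix (Fin n × Fin n) (Fin n × Fin n) ℝ)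

lemma ptrace1_add (X Y : Matrix (Fin n × Fin n) (Fin n × Fin n) ℝ) :
    ptrace1 (X + Y) = ptrace1 X + ptrace1 Y := by
  ext p s
  simp [ptrace1, Finset.sum_add_distrib]

lemma ptrace2_add (X Y : Matrix (Fin n × Fin n) (Fin n × Fin n) ℝ) :
    ptrace2 (X + Y) = ptrace2 X + ptrace2 Y := by
  ext q r
  simp [ptrace2, Finset.sum_add_distrib]

lemma ptrace1_kronecker (V U : Matrix (Fin n) (Fin n) ℝ) :
    ptrace1 (V ⊗ₖ U) = V.trace • U := by
  ext p s
  simp [ptrace1, Matrix.trace, Finset.sum_mul]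

lemma ptrace2_kronecker (V U : Matrix (Fin n) (Fin n) ℝ) :
    ptrace2 (V ⊗ₖ U) = U.trace • V := by
  ext q r
  simp [ptrace2, Matrix.trace, Finset.mul_sum, mul_comm]

lemma trace_ptrace1 (Z : Matrix (Fin n × Fin n) (Fin n × Fin n) ℝ) :
    (ptrace1 Z).trace = Z.trace := by
  simp only [ptrace1, Matrix.trace, Matrix.diag, Matrix.of_apply, Fintype.sum_prod_type]
  exact Finset.sum_comm

lemma Matrix.IsSymm.ptrace1 {Z : Matrix (Fin n × Fin n) (Fin n × Fin n) ℝ}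
    (hZ : Z.IsSymm) : (ptrace1 Z).IsSymm := by
  ext p s
  simp only [Matrix.transpose_apply, _root_.ptrace1, Matrix.of_apply]
  exact Finset.sum_congr rfl fun q _ => hZ.apply _ _

lemma Matrix.IsSymm.ptrace2 {Z : Matrix (Fin n × Fin n) (Fin n × Fin n) ℝ}
    (hZ : Z.IsSymm) : (ptrace2 Z).IsSymm := by
  ext q r
  simp only [Matrix.transpose_apply, _root_.ptrace2, Matrix.of_apply]
  exact Finset.sum_congr rfl fun p _ => hZ.apply _ _

lemma piRes_add (X Y : Matrix (Fin n × Fin n) (Fin n × Fin n) ℝ) :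
    piRes (X + Y) = piRes X + piRes Y := by
  simp only [piRes, ptrace1_add, ptrace2_add, Matrix.trace_add, Matrix.kronecker_add,
    Matrix.add_kronecker, add_div, add_smul]
  module

lemma piRes_one_kronecker [NeZero n] {A : Matrix (Fin n) (Fin n) ℝ} (hA : A.trace = 0) :
    piRes ((1 : Matrix (Fin n) (Fin n) ℝ) ⊗ₖ A) = 0 := by
  have hn : (n : ℝ) ≠ 0 := NeZero.ne _
  simp only [piRes, ptrace1_kronecker, ptrace2_kronecker, Matrix.trace_kronecker, hA,
    Matrix.trace_one, Fintype.card_fin, Matrix.kronecker_smul, zero_smul, mul_zero,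
    Matrix.zero_kronecker, zero_div, smul_zero, add_zero, smul_smul,
    inv_mul_cancel₀ hn, one_smul, sub_self]

lemma piRes_kronecker_one [NeZero n] (B : Matrix (Fin n) (Fin n) ℝ) :
    piRes (B ⊗ₖ (1 : Matrix (Fin n) (Fin n) ℝ)) = 0 := by
  have hn : (n : ℝ) ≠ 0 := NeZero.ne _
  simp only [piRes, ptrace1_kronecker, ptrace2_kronecker, Matrix.trace_kronecker,
    Matrix.trace_one, Fintype.card_fin, Matrix.kronecker_smul, Matrix.smul_kronecker,
    Matrix.one_kronecker_one, smul_smul]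
  have hcoef : B.trace * n / (n : ℝ) ^ 2 = (n : ℝ)⁻¹ * B.trace := by
    field_simp
  rw [hcoef, inv_mul_cancel₀ hn, one_smul]
  module

lemma self_sub_piRes (Z : Matrix (Fin n × Fin n) (Fin n × Fin n) ℝ) :
    Z - piRes Z = (1 : Matrix (Fin n) (Fin n) ℝ) ⊗ₖ
        ((n : ℝ)⁻¹ • ptrace1 Z - (Z.trace / (n : ℝ) ^ 2) • 1)
      + ((n : ℝ)⁻¹ • ptrace2 Z) ⊗ₖ (1 : Matrix (Fin n) (Fin n) ℝ) := by
  simp only [sub_eq_add_neg ((n : ℝ)⁻¹ • ptrace1 Z), ← neg_smul, Matrix.kronecker_add,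
    Matrix.kronecker_smul, Matrix.smul_kronecker, Matrix.one_kronecker_one, piRes]
  module

lemma trace_ptrace1_sub_smul_one [NeZero n] (Z : Matrix (Fin n × Fin n) (Fin n × Fin n) ℝ) :
    ((n : ℝ)⁻¹ • ptrace1 Z - (Z.trace / (n : ℝ) ^ 2) • 1).trace = 0 := by
  have hn : (n : ℝ) ≠ 0 := NeZero.ne _
  rw [Matrix.trace_sub, Matrix.trace_smul, Matrix.trace_smul, trace_ptrace1, Matrix.trace_one,
    Fintype.card_fin, smul_eq_mul, smul_eq_mul]
  field_simp
  ring

/-- `Π(Z) = 0` iff `Z = I ⊗ A + B ⊗ I` with `A, B` symmetric, `tr A = 0`. -/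
theorem piRes_eq_zero_iff [NeZero n]
    (Z : Matrix (Fin n × Fin n) (Fin n × Fin n) ℝ) (hZ : Z.IsSymm) :
    piRes Z = 0
      ↔ ∃ A B : Matrix (Fin n) (Fin n) ℝ, A.IsSymm ∧ B.IsSymm ∧ A.trace = 0 ∧
          Z = (1 : Matrix (Fin n) (Fin n) ℝ) ⊗ₖ A
              + B ⊗ₖ (1 : Matrix (Fin n) (Fin n) ℝ) := by
  constructor
  · intro h
    refine ⟨(n : ℝ)⁻¹ • ptrace1 Z - (Z.trace / (n : ℝ) ^ 2) • 1, (n : ℝ)⁻¹ • ptrace2 Z,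
      (hZ.ptrace1.smul _).sub (Matrix.isSymm_one.smul _), hZ.ptrace2.smul _,
      trace_ptrace1_sub_smul_one Z, ?_⟩
    simpa [h] using self_sub_piRes Z
  · rintro ⟨A, B, -, -, hA, rfl⟩
    rw [piRes_add, piRes_one_kronecker hA, piRes_kronecker_one, add_zero]
end

section
/- Let D_V, D_U be positive diagonal n×n matrices, S_V, S_U ∈ S++^n, and set P := D_V^{−1/2} S_V D_V^{1/2}, Q := D_U^{−1/2} S_U D_U^{1/2}. If P ⊗ Q + Pᵀ ⊗ Qᵀ − 2 I_{n²} = I_n ⊗ A + B ⊗ I_n for some symmetric matrices A, B, then P = λ I_n for some λ > 0 or Q = μ I_n for some μ > 0. -/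
/-!
Transposing the second tensor factor of the hypothesis and adding the result to it gives
`(P + Pᵀ) ⊗ (Q + Qᵀ) = I ⊗ A' + B' ⊗ I`. A Kronecker product that is a Kronecker sum has a scalar
factor: if `Y` is not scalar, an entry `Y k l ≠ 0` with `k ≠ l`, or a difference
`Y k k - Y l l ≠ 0`, yields `X i j * y = δᵢⱼ a` with `y ≠ 0`. Finally `P + Pᵀ = c • 1` forces
`P = (c / 2) • 1`: the entry `(P + Pᵀ)ᵢⱼ = (S_V)ᵢⱼ (√(vⱼ / vᵢ) + √(vᵢ / vⱼ))` vanishes only together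
with `Pᵢⱼ`, and `c / 2 = (S_V)ᵢᵢ > 0`.
-/

open Matrix Kronecker

namespace Matrix

variable {ι κ R : Type*}

def partialTranspose (M : Matrix (ι × κ) (ι × κ) R) : Matrix (ι × κ) (ι × κ) R :=
  fun p q => M (p.1, q.2) (q.1, p.2)

@[simp]
lemma partialTranspose_add [Add R] (M N : Matrix (ι × κ) (ι × κ) R) :
    partialTranspose (M + N) = partialTranspose M + partialTranspose N :=
  rfl

@[simp]
lemma partialTranspose_kronecker [Mul R] (X : Matrix ι ι R) (Y : Matrix κ κ R) :
    partialTranspose (X ⊗ₖ Y) = X ⊗ₖ Yᵀ :=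
  rfl

lemma add_transpose_kronecker_add_transpose_eq [CommRing R] [DecidableEq ι] [DecidableEq κ]
    {P B : Matrix ι ι R} {Q A : Matrix κ κ R}
    (h : P ⊗ₖ Q + Pᵀ ⊗ₖ Qᵀ - (2 : R) • (1 : Matrix (ι × κ) (ι × κ) R) = 1 ⊗ₖ A + B ⊗ₖ 1) :
    (P + Pᵀ) ⊗ₖ (Q + Qᵀ) = 1 ⊗ₖ (A + Aᵀ + (4 : R) • 1) + (2 • B) ⊗ₖ 1 := by
  have hK : P ⊗ₖ Q + Pᵀ ⊗ₖ Qᵀ = 1 ⊗ₖ (A + (2 : R) • 1) + B ⊗ₖ 1 := by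
    rw [sub_eq_iff_eq_add.mp h, kronecker_add, kronecker_smul, one_kronecker_one]
    abel
  have hK' := congrArg partialTranspose hK
  simp only [partialTranspose_add, partialTranspose_kronecker, transpose_transpose] at hK'
  calc (P + Pᵀ) ⊗ₖ (Q + Qᵀ) = (P ⊗ₖ Q + Pᵀ ⊗ₖ Qᵀ) + (P ⊗ₖ Qᵀ + Pᵀ ⊗ₖ Q) := by
        simp only [add_kronecker, kronecker_add]; abel
    _ = _ := by
        rw [hK, hK']
        simp only [kronecker_add, transpose_add, transpose_smul, transpose_one,
          kronecker_smul, smul_kronecker]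
        module

lemma eq_div_smul_one_of_mul_eq_ite [Field R] [DecidableEq ι] {X : Matrix ι ι R} {y a : R}
    (hy : y ≠ 0) (hX : ∀ i j, X i j * y = if i = j then a else 0) : X = (a / y) • 1 := by
  ext i j
  have hij := hX i j
  rw [smul_apply, one_apply, smul_eq_mul]
  split_ifs at hij ⊢ <;> field_simp <;> linear_combination hij

lemma IsDiag.exists_eq_smul_one [MulZeroOneClass R] [DecidableEq ι] {X : Matrix ι ι R}
    (hX : X.IsDiag) (hdiag : ∀ i j, X i i = X j j) : ∃ c : R, X = c • 1 := by
  rcases isEmpty_or_nonempty ι with hι | ⟨⟨i₀⟩⟩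
  · exact ⟨0, Subsingleton.elim _ _⟩
  refine ⟨X i₀ i₀, ?_⟩
  ext i j
  rcases eq_or_ne i j with rfl | hij
  · simp [hdiag i i₀]
  · simp [hX hij, hij]

lemma kronecker_eq_one_kronecker_add_kronecker_one_apply [CommRing R] [DecidableEq ι]
    [DecidableEq κ] {X B : Matrix ι ι R} {Y A : Matrix κ κ R} (h : X ⊗ₖ Y = 1 ⊗ₖ A + B ⊗ₖ 1)
    (i j : ι) (k l : κ) :
    X i j * Y k l = (if i = j then A k l else 0) + if k = l then B i j else 0 := by
  simpa [one_apply, ite_mul, mul_ite] using congrFun (congrFun h (i, k)) (j, l)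

theorem exists_eq_smul_one_or_of_kronecker_eq_one_kronecker_add_kronecker_one [Field R]
    [DecidableEq ι] [DecidableEq κ] {X B : Matrix ι ι R} {Y A : Matrix κ κ R}
    (h : X ⊗ₖ Y = 1 ⊗ₖ A + B ⊗ₖ 1) : (∃ c : R, X = c • 1) ∨ ∃ c : R, Y = c • 1 := by
  have hE := kronecker_eq_one_kronecker_add_kronecker_one_apply h
  by_cases hY_diag : Y.IsDiag
  · by_cases hdiag : ∀ k l, Y k k = Y l l
    · exact .inr (hY_diag.exists_eq_smul_one hdiag)
    push Not at hdiag
    obtain ⟨k, l, hkl⟩ := hdiag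
    refine .inl ⟨_, eq_div_smul_one_of_mul_eq_ite (sub_ne_zero.mpr hkl) (a := A k k - A l l) ?_⟩
    intro i j
    have hk := hE i j k k
    have hl := hE i j l l
    simp only [if_true] at hk hl
    split_ifs at hk hl ⊢ <;> linear_combination hk - hl
  obtain ⟨k, l, hkl, hY⟩ : ∃ k l, k ≠ l ∧ Y k l ≠ 0 := by
    simpa [IsDiag, Pairwise] using hY_diag
  refine .inl ⟨_, eq_div_smul_one_of_mul_eq_ite hY (a := A k l) fun i j => ?_⟩
  simpa [hkl] using hE i j k l

lemma IsSymm.diagonal_inv_mul_mul_diagonal_add_transpose_apply [Fintype ι] [DecidableEq ι]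
    [Field R] {S : Matrix ι ι R} (hS : S.IsSymm) (w : ι → R) (i j : ι) :
    (diagonal (fun i => (w i)⁻¹) * S * diagonal w
        + (diagonal (fun i => (w i)⁻¹) * S * diagonal w)ᵀ) i j
      = S i j * ((w i)⁻¹ * w j + (w j)⁻¹ * w i) := by
  simp only [add_apply, transpose_apply, mul_diagonal, diagonal_mul, hS.apply i j]
  ring

lemma PosDef.exists_pos_eq_smul_one_of_add_transpose_eq_smul_one [Fintype ι] [DecidableEq ι]
    {S P : Matrix ι ι ℝ} (hS : S.PosDef) {w : ι → ℝ} (hw : ∀ i, 0 < w i)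
    (hP : P = diagonal (fun i => (w i)⁻¹) * S * diagonal w) {c : ℝ} (hc : P + Pᵀ = c • 1) :
    ∃ l : ℝ, 0 < l ∧ P = l • 1 := by
  have hS_symm : S.IsSymm := isHermitian_iff_isSymm.mp hS.isHermitian
  have hsum (i j : ι) : S i j * ((w i)⁻¹ * w j + (w j)⁻¹ * w i) = if i = j then c else 0 := by
    rw [← hS_symm.diagonal_inv_mul_mul_diagonal_add_transpose_apply, ← hP, hc, smul_apply,
      one_apply, smul_eq_mul, mul_ite, mul_one, mul_zero]
  have hdiag (i : ι) : c = 2 * S i i := by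
    have := hsum i i
    rw [if_pos rfl, inv_mul_cancel₀ (hw i).ne'] at this
    linarith
  rcases isEmpty_or_nonempty ι with hι | ⟨⟨i₀⟩⟩
  · exact ⟨1, one_pos, Subsingleton.elim _ _⟩
  refine ⟨S i₀ i₀, hS.diag_pos, ?_⟩
  ext i j
  rw [hP, smul_apply, smul_eq_mul, one_apply, mul_diagonal, diagonal_mul]
  rcases eq_or_ne i j with rfl | hij
  · rw [if_pos rfl, mul_one, mul_right_comm, inv_mul_cancel₀ (hw i).ne', one_mul]
    linarith [hdiag i, hdiag i₀]
  · have hw_pos : 0 < (w i)⁻¹ * w j + (w j)⁻¹ * w i := by have := hw i; have := hw j; positivity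
    have hSij : S i j = 0 := by simpa [hij, hw_pos.ne'] using hsum i j
    simp [hSij, hij]

end Matrix

theorem transport_kronecker_sum_rigidity_general {n : ℕ}
    (v u : Fin n → ℝ) (hv : ∀ i, 0 < v i) (hu : ∀ i, 0 < u i)
    (SV SU : Matrix (Fin n) (Fin n) ℝ) (hSV : SV.PosDef) (hSU : SU.PosDef)
    (A B : Matrix (Fin n) (Fin n) ℝ)
    (P Q : Matrix (Fin n) (Fin n) ℝ)
    (hP : P = diagonal (fun i => (Real.sqrt (v i))⁻¹) * SV
        * diagonal (fun i => Real.sqrt (v i)))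
    (hQ : Q = diagonal (fun i => (Real.sqrt (u i))⁻¹) * SU
        * diagonal (fun i => Real.sqrt (u i)))
    (h : P ⊗ₖ Q + Pᵀ ⊗ₖ Qᵀ
        - (2 : ℝ) • (1 : Matrix (Fin n × Fin n) (Fin n × Fin n) ℝ)
        = (1 : Matrix (Fin n) (Fin n) ℝ) ⊗ₖ A
          + B ⊗ₖ (1 : Matrix (Fin n) (Fin n) ℝ)) :
    (∃ l : ℝ, 0 < l ∧ P = l • (1 : Matrix (Fin n) (Fin n) ℝ))
    ∨ (∃ m : ℝ, 0 < m ∧ Q = m • (1 : Matrix (Fin n) (Fin n) ℝ)) := by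
  rcases exists_eq_smul_one_or_of_kronecker_eq_one_kronecker_add_kronecker_one
      (add_transpose_kronecker_add_transpose_eq h) with ⟨c, hc⟩ | ⟨c, hc⟩
  · exact .inl <| hSV.exists_pos_eq_smul_one_of_add_transpose_eq_smul_one
      (fun i => Real.sqrt_pos.mpr (hv i)) hP hc
  · exact .inr <| hSU.exists_pos_eq_smul_one_of_add_transpose_eq_smul_one
      (fun i => Real.sqrt_pos.mpr (hu i)) hQ hc

/-- Transport Kronecker-sum rigidity: with positive diagonal `D_V, D_U`,
`S_V, S_U` positive definite, `P = D_V^{−1/2} S_V D_V^{1/2}`,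
`Q = D_U^{−1/2} S_U D_U^{1/2}`, if
`P ⊗ Q + Pᵀ ⊗ Qᵀ − 2I = I ⊗ A + B ⊗ I` for symmetric `A, B`, then `P` or `Q`
is a positive scalar multiple of the identity. -/
theorem transport_kronecker_sum_rigidity {n : ℕ}
    (v u : Fin n → ℝ) (hv : ∀ i, 0 < v i) (hu : ∀ i, 0 < u i)
    (SV SU : Matrix (Fin n) (Fin n) ℝ) (hSV : SV.PosDef) (hSU : SU.PosDef)
    (A B : Matrix (Fin n) (Fin n) ℝ) (hA : A.IsSymm) (hB : B.IsSymm)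
    (P Q : Matrix (Fin n) (Fin n) ℝ)
    (hP : P = diagonal (fun i => (Real.sqrt (v i))⁻¹) * SV
        * diagonal (fun i => Real.sqrt (v i)))
    (hQ : Q = diagonal (fun i => (Real.sqrt (u i))⁻¹) * SU
        * diagonal (fun i => Real.sqrt (u i)))
    (h : P ⊗ₖ Q + Pᵀ ⊗ₖ Qᵀ
        - (2 : ℝ) • (1 : Matrix (Fin n × Fin n) (Fin n × Fin n) ℝ)
        = (1 : Matrix (Fin n) (Fin n) ℝ) ⊗ₖ A
          + B ⊗ₖ (1 : Matrix (Fin n) (Fin n) ℝ)) :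
    (∃ l : ℝ, 0 < l ∧ P = l • (1 : Matrix (Fin n) (Fin n) ℝ))
    ∨ (∃ m : ℝ, 0 < m ∧ Q = m • (1 : Matrix (Fin n) (Fin n) ℝ)) :=
  transport_kronecker_sum_rigidity_general v u hv hu SV SU hSV hSU A B P Q hP hQ h
end
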